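/- Let n, r ≥ 2, p, q ≥ 1, and m = n + r − 2. Let E ∈ ℝ^{n×n}, Ê ∈ ℝ^{r×r} be diagonal positive definite; let L ∈ ℝ^{n×n}, L̂ ∈ ℝ^{r×r} satisfy L1_n = 0, 1_nᵀL = 0, L̂1_r = 0, 1_rᵀL̂ = 0; let F ∈ ℝ^{n×p}, F̂ ∈ ℝ^{r×p}, H ∈ ℝ^{q×n}, Ĥ ∈ ℝ^{q×r}, and α, β ∈ ℝ. Define A_e = blockdiag(−E^{−1}L, −Ê^{−1}L̂), B_e = [E^{−1}F ; βÊ^{−1}F̂], C_e = [H , −αĤ], and, with Sₙ, Sₙᴸ, S_r, S_rᴸ as in the paper, Ā_e = blockdiag(−SₙᴸLE^{−1}Sₙ, −S_rᴸL̂Ê^{−1}S_r), B̄_e = [SₙᴸF ; βS_rᴸF̂], C̄_e = [HE^{−1}Sₙ , −αĤÊ^{−1}S_r]. Then for every complex number s with s ≠ 0 and sI_m − Ā_e invertible, the matrix sI_{n+r} − A_e is invertible and C_e (sI_{n+r} − A_e)^{−1} B_e = (1/s)·( (1/trace(E)) H 1_n 1_nᵀ F − (αβ/trace(Ê)) Ĥ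 1_r 1_rᵀ F̂ ) + C̄_e (sI_m − Ā_e)^{−1} B̄_e. -/

import Mathlib

open Matrix

/-- The all-ones column vector of length `k`, as a `k × 1` matrix. -/
def onesCol (k : ℕ) : Matrix (Fin k) (Fin 1) ℝ := Matrix.of fun _ _ => 1

/-- The matrix `Sₙ = [−I_{n−1}; 1_{n−1}ᵀ] ∈ ℝ^{n×(n−1)}`, with `n = m + 1`. -/
def Sn (m : ℕ) : Matrix (Fin (m + 1)) (Fin m) ℝ :=
  Matrix.of fun i j => if (i : ℕ) = m then 1 else if (i : ℕ) = (j : ℕ) then -1 else 0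

/-- The weighted left inverse `Sₙᴸ = (Sₙᵀ E⁻¹ Sₙ)⁻¹ Sₙᵀ E⁻¹`. -/
noncomputable def SnL (m : ℕ) (E : Matrix (Fin (m + 1)) (Fin (m + 1)) ℝ) :
    Matrix (Fin m) (Fin (m + 1)) ℝ :=
  ((Sn m)ᵀ * E⁻¹ * Sn m)⁻¹ * (Sn m)ᵀ * E⁻¹

/-- Entrywise complexification of a real matrix. -/
def cmap {α β : Type*} (A : Matrix α β ℝ) : Matrix α β ℂ := A.map fun x => (x : ℂ)

/-!
The all-ones vector `1` spans the kernel of `E⁻¹L` and `1ᵀE` its left kernel. The columns of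
`E⁻¹Sₙ` and the rows of `SₙᴸE` complete them to a splitting of the identity,
`E⁻¹Sₙ · SₙᴸE + 1 · 1ᵀE / tr E = I`; the trace appears because `1ᵀE1 = tr E` for diagonal `E`.
For any splitting `UV + uw = I` with `Au = 0` and `wA = 0` one has `(sI − A)U = U(sI − VAU)`,
whence `(sI − A)⁻¹ = uw / s + U(sI − VAU)⁻¹V`. Applied blockwise to `A_e`, the projected
realization `(VA_eU, VB_e, C_eU)` is exactly `(Ā_e, B̄_e, C̄_e)`, and `C_e u w B_e` is the residue
at `s = 0`.
-/

section Splitting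

variable {K : Type*} [Field K] {n k r : Type*} [Fintype n] [DecidableEq n] [Fintype k]
  [DecidableEq k] [Fintype r] {A : Matrix n n K} {U : Matrix n k K} {V : Matrix k n K}
  {u : Matrix n r K} {w : Matrix r n K}

theorem smul_one_sub_mul_eq_mul_of_splitting (hUV : U * V + u * w = 1) (hwA : w * A = 0)
    (s : K) : (s • 1 - A) * U = U * (s • 1 - V * A * U) := by
  have hAU : A * U = U * (V * A * U) := calc
    A * U = (U * V + u * w) * A * U := by rw [hUV, Matrix.one_mul]
    _ = U * (V * A * U) := by
      simp only [Matrix.add_mul, Matrix.mul_assoc, hwA, Matrix.mul_zero, add_zero]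
  rw [Matrix.sub_mul, Matrix.mul_sub, Matrix.smul_mul, Matrix.mul_smul, Matrix.one_mul,
    Matrix.mul_one, hAU]

theorem smul_one_sub_mul_eq_one_of_splitting (hUV : U * V + u * w = 1) (hAu : A * u = 0)
    (hwA : w * A = 0) {s : K} (hs : s ≠ 0) (hX : IsUnit (s • 1 - V * A * U)) :
    (s • 1 - A) * (s⁻¹ • (u * w) + U * (s • 1 - V * A * U)⁻¹ * V) = 1 := by
  have hsu : (s • 1 - A) * (s⁻¹ • (u * w)) = u * w := by
    rw [Matrix.mul_smul, ← Matrix.mul_assoc, Matrix.sub_mul, hAu, sub_zero, Matrix.smul_mul,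
      Matrix.one_mul, Matrix.smul_mul, smul_smul, inv_mul_cancel₀ hs, one_smul]
  rw [Matrix.mul_add, hsu, ← Matrix.mul_assoc, ← Matrix.mul_assoc,
    smul_one_sub_mul_eq_mul_of_splitting hUV hwA, Matrix.mul_assoc U,
    mul_nonsing_inv _ ((isUnit_iff_isUnit_det _).mp hX), Matrix.mul_one, add_comm, hUV]

end Splitting

section Complexification

variable {l m n : Type*}

theorem cmap_mul [Fintype m] (A : Matrix l m ℝ) (B : Matrix m n ℝ) :
    cmap (A * B) = cmap A * cmap B :=
  Matrix.map_mul (f := Complex.ofRealHom)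

theorem cmap_add (A B : Matrix m n ℝ) : cmap (A + B) = cmap A + cmap B :=
  Matrix.map_add _ (map_add Complex.ofRealHom) A B

theorem cmap_zero : cmap (0 : Matrix m n ℝ) = 0 :=
  Matrix.map_zero _ Complex.ofReal_zero

theorem cmap_one [DecidableEq n] : cmap (1 : Matrix n n ℝ) = 1 :=
  Matrix.map_one _ Complex.ofReal_zero Complex.ofReal_one

end Complexification

noncomputable def transferFunction {n ι o : Type*} [Fintype n] [DecidableEq n]
    (A : Matrix n n ℝ) (B : Matrix n ι ℝ) (C : Matrix o n ℝ) (s : ℂ) : Matrix o ι ℂ :=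
  cmap C * (s • 1 - cmap A)⁻¹ * cmap B

theorem transferFunction_eq_of_splitting {n k r ι o : Type*} [Fintype n] [DecidableEq n]
    [Fintype k] [DecidableEq k] [Fintype r] {A : Matrix n n ℝ} (B : Matrix n ι ℝ)
    (C : Matrix o n ℝ) {U : Matrix n k ℝ} {V : Matrix k n ℝ} {u : Matrix n r ℝ}
    {w : Matrix r n ℝ} (hUV : U * V + u * w = 1) (hAu : A * u = 0) (hwA : w * A = 0)
    {s : ℂ} (hs : s ≠ 0) (hX : IsUnit (s • 1 - cmap (V * A * U))) :
    IsUnit (s • 1 - cmap A) ∧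
      transferFunction A B C s =
        s⁻¹ • cmap (C * u * (w * B)) + transferFunction (V * A * U) (V * B) (C * U) s := by
  have hUV' : cmap U * cmap V + cmap u * cmap w = 1 := by
    rw [← cmap_mul, ← cmap_mul, ← cmap_add, hUV, cmap_one]
  have hAu' : cmap A * cmap u = 0 := by rw [← cmap_mul, hAu, cmap_zero]
  have hwA' : cmap w * cmap A = 0 := by rw [← cmap_mul, hwA, cmap_zero]
  rw [cmap_mul, cmap_mul] at hX
  have hinv := smul_one_sub_mul_eq_one_of_splitting hUV' hAu' hwA' hs hX
  refine ⟨IsUnit.of_mul_eq_one _ hinv, ?_⟩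
  simp only [transferFunction, inv_eq_right_inv hinv, cmap_mul, Matrix.mul_add, Matrix.add_mul,
    Matrix.mul_smul, Matrix.smul_mul, Matrix.mul_assoc]

section ConsensusCoordinates

variable {m : ℕ}

theorem onesCol_transpose_mul_Sn : (onesCol (m + 1))ᵀ * Sn m = 0 := by
  ext i j
  simp [Sn, onesCol, mul_apply, Fin.sum_univ_castSucc, Fin.val_eq_val, Fin.val_castSucc,
    (Fin.isLt _).ne]

theorem Sn_mulVec_castSucc (x : Fin m → ℝ) (i : Fin m) : (Sn m *ᵥ x) i.castSucc = -x i := by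
  simp [Sn, mulVec, dotProduct, i.isLt.ne, Fin.val_eq_val]

theorem Sn_mulVec_injective : Function.Injective (Sn m).mulVec := fun x y hxy =>
  funext fun i => neg_injective <| by
    rw [← Sn_mulVec_castSucc, ← Sn_mulVec_castSucc, hxy]

theorem onesCol_transpose_mul_mul_onesCol {D : Matrix (Fin m) (Fin m) ℝ} (hD : D.IsDiag) :
    (onesCol m)ᵀ * D * onesCol m = D.trace • 1 := by
  ext i j
  simp [onesCol, mul_apply, trace, Subsingleton.elim i j,
    Finset.sum_eq_single_of_mem _ (Finset.mem_univ _) fun y _ hy => hD hy]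

variable {E : Matrix (Fin (m + 1)) (Fin (m + 1)) ℝ}

theorem posDef_Sn_transpose_mul_inv_mul_Sn (hE : E.PosDef) :
    ((Sn m)ᵀ * E⁻¹ * Sn m).PosDef := by
  simpa using hE.inv.conjTranspose_mul_mul_same Sn_mulVec_injective

theorem SnL_mul_Sn (hE : E.PosDef) : SnL m E * Sn m = 1 := by
  rw [SnL, Matrix.mul_assoc, Matrix.mul_assoc, ← Matrix.mul_assoc (Sn m)ᵀ,
    nonsing_inv_mul _ (posDef_Sn_transpose_mul_inv_mul_Sn hE).det_pos.ne'.isUnit]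

theorem SnL_mul_mul_onesCol (hE : IsUnit E.det) : SnL m E * E * onesCol (m + 1) = 0 := by
  have hSones : (Sn m)ᵀ * onesCol (m + 1) = 0 := by
    simpa [transpose_mul] using congrArg transpose (onesCol_transpose_mul_Sn (m := m))
  simp only [SnL, Matrix.mul_assoc, nonsing_inv_mul_cancel_left _ _ hE, hSones, Matrix.mul_zero]

theorem inv_mul_Sn_mul_SnL_mul_add_eq_one (hEd : E.IsDiag) (hE : E.PosDef) :
    E⁻¹ * Sn m * (SnL m E * E) + E.trace⁻¹ • (onesCol (m + 1) * ((onesCol (m + 1))ᵀ * E)) =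
      1 := by
  have hdet := hE.det_pos.ne'.isUnit
  have htr : E.trace ≠ 0 := hE.trace_pos.ne'
  -- A left inverse of the square matrix `[E⁻¹Sₙ | 1]` is also a right inverse.
  rw [← Matrix.mul_smul, ← fromCols_mul_fromRows,
    fromCols_mul_fromRows_eq_one_comm finSumFinEquiv.symm, fromRows_mul_fromCols, ← fromBlocks_one]
  congr 1
  · rw [Matrix.mul_assoc, mul_nonsing_inv_cancel_left _ _ hdet, SnL_mul_Sn hE]
  · rw [SnL_mul_mul_onesCol hdet]
  · rw [smul_mul, Matrix.mul_assoc, mul_nonsing_inv_cancel_left _ _ hdet,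
      onesCol_transpose_mul_Sn, smul_zero]
  · rw [smul_mul, onesCol_transpose_mul_mul_onesCol hEd, smul_smul, inv_mul_cancel₀ htr, one_smul]

end ConsensusCoordinates

/-- Here `n = a + 1`, `r = b + 1` and `m = n + r − 2 = a + b`. -/
theorem error_transfer_function_decomposition_general (a b p q : ℕ)
    (E : Matrix (Fin (a + 1)) (Fin (a + 1)) ℝ) (hEdiag : E.IsDiag) (hEpd : E.PosDef)
    (Eh : Matrix (Fin (b + 1)) (Fin (b + 1)) ℝ) (hEhdiag : Eh.IsDiag) (hEhpd : Eh.PosDef)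
    (L : Matrix (Fin (a + 1)) (Fin (a + 1)) ℝ)
    (hL1 : L * onesCol (a + 1) = 0) (h1L : (onesCol (a + 1))ᵀ * L = 0)
    (Lh : Matrix (Fin (b + 1)) (Fin (b + 1)) ℝ)
    (hLh1 : Lh * onesCol (b + 1) = 0) (h1Lh : (onesCol (b + 1))ᵀ * Lh = 0)
    (F : Matrix (Fin (a + 1)) (Fin p) ℝ) (Fh : Matrix (Fin (b + 1)) (Fin p) ℝ)
    (H : Matrix (Fin q) (Fin (a + 1)) ℝ) (Hh : Matrix (Fin q) (Fin (b + 1)) ℝ)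
    (al be : ℝ) (s : ℂ) (hs : s ≠ 0)
    (hinv : IsUnit (s • (1 : Matrix (Fin a ⊕ Fin b) (Fin a ⊕ Fin b) ℂ) -
      cmap (fromBlocks (-(SnL a E * L * E⁻¹ * Sn a)) 0 0 (-(SnL b Eh * Lh * Eh⁻¹ * Sn b))))) :
    IsUnit (s • (1 : Matrix (Fin (a + 1) ⊕ Fin (b + 1)) (Fin (a + 1) ⊕ Fin (b + 1)) ℂ) -
      cmap (fromBlocks (-(E⁻¹ * L)) 0 0 (-(Eh⁻¹ * Lh)))) ∧
    cmap (fromCols H ((-al) • Hh)) *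
        (s • (1 : Matrix (Fin (a + 1) ⊕ Fin (b + 1)) (Fin (a + 1) ⊕ Fin (b + 1)) ℂ) -
          cmap (fromBlocks (-(E⁻¹ * L)) 0 0 (-(Eh⁻¹ * Lh))))⁻¹ *
        cmap (fromRows (E⁻¹ * F) (be • (Eh⁻¹ * Fh))) =
      s⁻¹ • cmap ((E.trace)⁻¹ • (H * onesCol (a + 1) * (onesCol (a + 1))ᵀ * F) -
          (al * be / Eh.trace) • (Hh * onesCol (b + 1) * (onesCol (b + 1))ᵀ * Fh)) +
        cmap (fromCols (H * E⁻¹ * Sn a) ((-al) • (Hh * Eh⁻¹ * Sn b))) *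
          (s • (1 : Matrix (Fin a ⊕ Fin b) (Fin a ⊕ Fin b) ℂ) -
            cmap (fromBlocks (-(SnL a E * L * E⁻¹ * Sn a)) 0 0
              (-(SnL b Eh * Lh * Eh⁻¹ * Sn b))))⁻¹ *
          cmap (fromRows (SnL a E * F) (be • (SnL b Eh * Fh))) := by
  have hE := hEpd.det_pos.ne'.isUnit
  have hEh := hEhpd.det_pos.ne'.isUnit
  set U := fromBlocks (E⁻¹ * Sn a) 0 0 (Eh⁻¹ * Sn b)
  set V := fromBlocks (SnL a E * E) 0 0 (SnL b Eh * Eh)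
  set u := fromBlocks (onesCol (a + 1)) 0 0 (onesCol (b + 1))
  set w := fromBlocks (E.trace⁻¹ • ((onesCol (a + 1))ᵀ * E)) 0 0
    (Eh.trace⁻¹ • ((onesCol (b + 1))ᵀ * Eh))
  have hVAU : V * fromBlocks (-(E⁻¹ * L)) 0 0 (-(Eh⁻¹ * Lh)) * U =
      fromBlocks (-(SnL a E * L * E⁻¹ * Sn a)) 0 0 (-(SnL b Eh * Lh * Eh⁻¹ * Sn b)) := by
    simp [U, V, fromBlocks_multiply, Matrix.mul_assoc, mul_nonsing_inv_cancel_left _ _ hE,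
      mul_nonsing_inv_cancel_left _ _ hEh]
  obtain ⟨hunit, htf⟩ := transferFunction_eq_of_splitting
    (fromRows (E⁻¹ * F) (be • (Eh⁻¹ * Fh))) (fromCols H ((-al) • Hh))
    (A := fromBlocks (-(E⁻¹ * L)) 0 0 (-(Eh⁻¹ * Lh))) (U := U) (V := V) (u := u) (w := w)
    (by simp [U, V, u, w, fromBlocks_multiply, fromBlocks_add,
      inv_mul_Sn_mul_SnL_mul_add_eq_one hEdiag hEpd,
      inv_mul_Sn_mul_SnL_mul_add_eq_one hEhdiag hEhpd])
    (by simp [u, fromBlocks_multiply, Matrix.mul_assoc, hL1, hLh1])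
    (by simp [w, fromBlocks_multiply, Matrix.mul_assoc, mul_nonsing_inv_cancel_left _ _ hE,
      mul_nonsing_inv_cancel_left _ _ hEh, h1L, h1Lh])
    hs (by rwa [hVAU])
  have hCU : fromCols H ((-al) • Hh) * U =
      fromCols (H * E⁻¹ * Sn a) ((-al) • (Hh * Eh⁻¹ * Sn b)) := by
    simp [U, fromCols_mul_fromBlocks, Matrix.mul_assoc]
  have hVB : V * fromRows (E⁻¹ * F) (be • (Eh⁻¹ * Fh)) =
      fromRows (SnL a E * F) (be • (SnL b Eh * Fh)) := by
    simp [V, fromBlocks_mul_fromRows, Matrix.mul_assoc, mul_nonsing_inv_cancel_left _ _ hE,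
      mul_nonsing_inv_cancel_left _ _ hEh]
  have hres : fromCols H ((-al) • Hh) * u * (w * fromRows (E⁻¹ * F) (be • (Eh⁻¹ * Fh))) =
      E.trace⁻¹ • (H * onesCol (a + 1) * (onesCol (a + 1))ᵀ * F) -
        (al * be / Eh.trace) • (Hh * onesCol (b + 1) * (onesCol (b + 1))ᵀ * Fh) := by
    simp [u, w, fromCols_mul_fromBlocks, fromBlocks_mul_fromRows, fromCols_mul_fromRows,
      Matrix.mul_assoc, mul_nonsing_inv_cancel_left _ _ hE, mul_nonsing_inv_cancel_left _ _ hEh]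
    module
  refine ⟨hunit, htf.trans ?_⟩
  rw [hres, hVAU, hCU, hVB]
  rfl

/-- Partial fraction decomposition of the error transfer function (proof of Lemma 1):
`C_e (sI − A_e)⁻¹ B_e = (1/s)((1/tr E) H 1 1ᵀ F − (αβ/tr Ê) Ĥ 1 1ᵀ F̂) + C̄_e (sI − Ā_e)⁻¹ B̄_e`,
and `sI − A_e` is invertible, for every `s ≠ 0` with `sI − Ā_e` invertible.
Here `n = a+1`, `r = b+1`, `m = n + r − 2 = a + b`. -/
theorem error_transfer_function_decomposition (a b p q : ℕ)
    (ha : 1 ≤ a) (hb : 1 ≤ b) (hp : 1 ≤ p) (hq : 1 ≤ q)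
    (E : Matrix (Fin (a + 1)) (Fin (a + 1)) ℝ) (hEdiag : E.IsDiag) (hEpd : E.PosDef)
    (Eh : Matrix (Fin (b + 1)) (Fin (b + 1)) ℝ) (hEhdiag : Eh.IsDiag) (hEhpd : Eh.PosDef)
    (L : Matrix (Fin (a + 1)) (Fin (a + 1)) ℝ)
    (hL1 : L * onesCol (a + 1) = 0) (h1L : (onesCol (a + 1))ᵀ * L = 0)
    (Lh : Matrix (Fin (b + 1)) (Fin (b + 1)) ℝ)
    (hLh1 : Lh * onesCol (b + 1) = 0) (h1Lh : (onesCol (b + 1))ᵀ * Lh = 0)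
    (F : Matrix (Fin (a + 1)) (Fin p) ℝ) (Fh : Matrix (Fin (b + 1)) (Fin p) ℝ)
    (H : Matrix (Fin q) (Fin (a + 1)) ℝ) (Hh : Matrix (Fin q) (Fin (b + 1)) ℝ)
    (al be : ℝ) (s : ℂ) (hs : s ≠ 0)
    (hinv : IsUnit (s • (1 : Matrix (Fin a ⊕ Fin b) (Fin a ⊕ Fin b) ℂ) -
      cmap (fromBlocks (-(SnL a E * L * E⁻¹ * Sn a)) 0 0 (-(SnL b Eh * Lh * Eh⁻¹ * Sn b))))) :
    IsUnit (s • (1 : Matrix (Fin (a + 1) ⊕ Fin (b + 1)) (Fin (a + 1) ⊕ Fin (b + 1)) ℂ) -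
      cmap (fromBlocks (-(E⁻¹ * L)) 0 0 (-(Eh⁻¹ * Lh)))) ∧
    cmap (fromCols H ((-al) • Hh)) *
        (s • (1 : Matrix (Fin (a + 1) ⊕ Fin (b + 1)) (Fin (a + 1) ⊕ Fin (b + 1)) ℂ) -
          cmap (fromBlocks (-(E⁻¹ * L)) 0 0 (-(Eh⁻¹ * Lh))))⁻¹ *
        cmap (fromRows (E⁻¹ * F) (be • (Eh⁻¹ * Fh))) =
      s⁻¹ • cmap ((E.trace)⁻¹ • (H * onesCol (a + 1) * (onesCol (a + 1))ᵀ * F) -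
          (al * be / Eh.trace) • (Hh * onesCol (b + 1) * (onesCol (b + 1))ᵀ * Fh)) +
        cmap (fromCols (H * E⁻¹ * Sn a) ((-al) • (Hh * Eh⁻¹ * Sn b))) *
          (s • (1 : Matrix (Fin a ⊕ Fin b) (Fin a ⊕ Fin b) ℂ) -
            cmap (fromBlocks (-(SnL a E * L * E⁻¹ * Sn a)) 0 0
              (-(SnL b Eh * Lh * Eh⁻¹ * Sn b))))⁻¹ *
          cmap (fromRows (SnL a E * F) (be • (SnL b Eh * Fh))) :=
  error_transfer_function_decomposition_general a b p q E hEdiag hEpd Eh hEhdiag hEhpd L hL1 h1L Lh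
    hLh1 h1Lh F Fh H Hh al be s hs hinv
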